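/- Let U, V be n×n unitary matrices such that the block-index matrix X = (U*V)∘conj(U*V) equals (1/n)J, where J is the n×n all-ones matrix (equivalently, U*V is 1/√n times a complex Hadamard matrix). Then for every pair of partitions r = (m_1,…,m_{d1}), c = (n_1,…,n_{d2}) of n, the commutative algebras A = span{U_iU_i*} and B = span{V_jV_j*} (with columns of U partitioned by r and columns of V partitioned by c) are quasiorthogonal. -/

import Mathlib

open Matrix

/-- Two subsets of `M_n(ℂ)` are *quasiorthogonal* if `Tr(AB) = Tr(A)Tr(B)/n` for all
`A ∈ 𝒜`, `B ∈ ℬ`. -/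
def Quasiorthogonal {n : ℕ} (𝒜 ℬ : Set (Matrix (Fin n) (Fin n) ℂ)) : Prop :=
  ∀ A ∈ 𝒜, ∀ B ∈ ℬ, (A * B).trace = A.trace * B.trace / (n : ℂ)

/-- The index in `Fin n` of column `b` of the `i`-th block, when the `n` columns are
partitioned consecutively into `d` blocks of sizes `m 0, m 1, …, m (d-1)`. -/
def colIdx {n d : ℕ} (m : Fin d → ℕ) (h : ∑ i, m i = n) (i : Fin d) (b : Fin (m i)) :
    Fin n := by
  refine ⟨(∑ j ∈ Finset.univ.filter (fun j => j < i), m j) + b.1, ?_⟩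
  have hb := b.2
  have hnotmem : i ∉ Finset.univ.filter (fun j => j < i) := by simp
  have hle : ∑ j ∈ insert i (Finset.univ.filter (fun j => j < i)), m j ≤ ∑ j, m j :=
    Finset.sum_le_sum_of_subset (Finset.subset_univ _)
  rw [Finset.sum_insert hnotmem] at hle
  omega

/-- `U_i`: the `n × m_i` submatrix of `U` consisting of the `i`-th consecutive block of
columns. -/
def colBlock {n d : ℕ} (U : Matrix (Fin n) (Fin n) ℂ) (m : Fin d → ℕ)
    (h : ∑ i, m i = n) (i : Fin d) : Matrix (Fin n) (Fin (m i)) ℂ :=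
  fun a b => U a (colIdx m h i b)

/-- `P_i = U_i U_i^*`. -/
noncomputable def blockProj {n d : ℕ} (U : Matrix (Fin n) (Fin n) ℂ) (m : Fin d → ℕ)
    (h : ∑ i, m i = n) (i : Fin d) : Matrix (Fin n) (Fin n) ℂ :=
  colBlock U m h i * (colBlock U m h i)ᴴ

lemma trace_blockProj {n d : ℕ} (U : Matrix (Fin n) (Fin n) ℂ)
    (hU : star U * U = 1) (m : Fin d → ℕ) (hm : ∑ i, m i = n) (i : Fin d) :
    (blockProj U m hm i).trace = (m i : ℂ) := by
  have key : ∀ b : Fin (m i),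
      ∑ x, U x (colIdx m hm i b) * (starRingEnd ℂ) (U x (colIdx m hm i b)) = 1 := by
    intro b
    have h := congrFun (congrFun hU (colIdx m hm i b)) (colIdx m hm i b)
    simp only [Matrix.mul_apply, Matrix.star_apply, Matrix.one_apply_eq] at h
    rw [← h]
    exact Finset.sum_congr rfl fun x _ => mul_comm _ _
  have : (blockProj U m hm i).trace
      = ∑ x, ∑ b, U x (colIdx m hm i b) * (starRingEnd ℂ) (U x (colIdx m hm i b)) := by
    simp [blockProj, Matrix.trace, Matrix.diag, Matrix.mul_apply, colBlock,
      Matrix.conjTranspose_apply]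
  rw [this, Finset.sum_comm]
  simp [key]

lemma trace_blockProj_mul {n d1 d2 : ℕ} (U V : Matrix (Fin n) (Fin n) ℂ)
    (hX : ∀ a b : Fin n, ‖(Uᴴ * V) a b‖ ^ 2 = 1 / (n : ℝ))
    (m : Fin d1 → ℕ) (hm : ∑ i, m i = n) (c : Fin d2 → ℕ) (hc : ∑ j, c j = n)
    (i : Fin d1) (j : Fin d2) :
    (blockProj U m hm i * blockProj V c hc j).trace = (m i : ℂ) * (c j : ℂ) / (n : ℂ) := by
  set A := colBlock U m hm i with hA
  set B := colBlock V c hc j with hB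
  set W := Aᴴ * B with hWdef
  have h1 : blockProj U m hm i * blockProj V c hc j = A * W * Bᴴ := by
    simp [blockProj, hWdef, Matrix.mul_assoc]
    rfl
  have h2 : (A * W * Bᴴ).trace = (Wᴴ * W).trace := by
    rw [Matrix.trace_mul_comm]
    rw [hWdef, Matrix.conjTranspose_mul, Matrix.conjTranspose_conjTranspose]
    simp [Matrix.mul_assoc]
  have hW : ∀ (a : Fin (m i)) (b : Fin (c j)),
      W a b = (Uᴴ * V) (colIdx m hm i a) (colIdx c hc j b) := by
    intro a b
    simp [hWdef, hA, hB, Matrix.mul_apply, colBlock, Matrix.conjTranspose_apply]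
  have hterm : ∀ (a : Fin (m i)) (b : Fin (c j)),
      (starRingEnd ℂ) (W a b) * W a b = ((1 / (n : ℝ) : ℝ) : ℂ) := by
    intro a b
    have h3 : ‖W a b‖ ^ 2 = 1 / (n : ℝ) := by rw [hW]; exact hX _ _
    have h4 : (starRingEnd ℂ) (W a b) * W a b = ((‖W a b‖ ^ 2 : ℝ) : ℂ) := by
      rw [mul_comm, Complex.mul_conj']
      norm_cast
    rw [h4, h3]
  have h5 : (Wᴴ * W).trace = ∑ b, ∑ a, (starRingEnd ℂ) (W a b) * W a b := by
    simp [Matrix.trace, Matrix.diag, Matrix.mul_apply, Matrix.conjTranspose_apply]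
  rw [h1, h2, h5]
  simp only [hterm, Finset.sum_const, Finset.card_univ, Fintype.card_fin, nsmul_eq_mul]
  push_cast
  ring

/-- If the block-index matrix `X = (U*V)∘conj(U*V)` of two unitaries
`U, V` equals `(1/n)J` (equivalently, `U*V` is `1/√n` times a complex Hadamard matrix),
then for every pair of partitions `r`, `c` of `n` the commutative algebras
`𝒜 = span {U_i U_i^*}` and `ℬ = span {V_j V_j^*}` are quasiorthogonal. -/
theorem quasiorthogonal_of_hadamard {n : ℕ}
    (U V : Matrix (Fin n) (Fin n) ℂ)
    (hU : U ∈ Matrix.unitaryGroup (Fin n) ℂ) (hV : V ∈ Matrix.unitaryGroup (Fin n) ℂ)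
    (hX : ∀ a b : Fin n, ‖(Uᴴ * V) a b‖ ^ 2 = 1 / (n : ℝ)) :
    ∀ (d1 d2 : ℕ) (m : Fin d1 → ℕ) (hm : ∑ i, m i = n) (_ : ∀ i, 0 < m i)
      (c : Fin d2 → ℕ) (hc : ∑ j, c j = n) (_ : ∀ j, 0 < c j),
      Quasiorthogonal
        (Submodule.span ℂ (Set.range (blockProj U m hm)) : Set (Matrix (Fin n) (Fin n) ℂ))
        (Submodule.span ℂ (Set.range (blockProj V c hc)) : Set (Matrix (Fin n) (Fin n) ℂ)) := by
  intro d1 d2 m hm _ c hc _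
  have hdiag : ∀ (i : Fin d1) (j : Fin d2),
      (blockProj U m hm i * blockProj V c hc j).trace
        = (blockProj U m hm i).trace * (blockProj V c hc j).trace / (n : ℂ) := by
    intro i j
    rw [trace_blockProj U hU.1 m hm i, trace_blockProj V hV.1 c hc j,
      trace_blockProj_mul U V hX m hm c hc i j]
  intro A hA B hB
  rw [SetLike.mem_coe] at hA hB
  induction hA using Submodule.span_induction with
  | mem A hA' =>
    obtain ⟨i, rfl⟩ := hA'
    induction hB using Submodule.span_induction with
    | mem B hB' => obtain ⟨j, rfl⟩ := hB'; exact hdiag i j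
    | zero => simp
    | add B₁ B₂ _ _ h1 h2 =>
      rw [mul_add, Matrix.trace_add, Matrix.trace_add, h1, h2]; ring
    | smul r B _ h1 =>
      rw [mul_smul_comm, Matrix.trace_smul, Matrix.trace_smul, smul_eq_mul, smul_eq_mul, h1]
      ring
  | zero => simp
  | add A₁ A₂ _ _ h1 h2 =>
    rw [add_mul, Matrix.trace_add, Matrix.trace_add, h1, h2]; ring
  | smul r A _ h1 =>
    rw [smul_mul_assoc, Matrix.trace_smul, Matrix.trace_smul, smul_eq_mul, smul_eq_mul, h1]
    ring
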